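/- Let K_1 ⊆ ℂ^{p_1} and K_2 ⊆ ℂ^{p_2} be determining compact sets, let A = (a_j) ⊆ K_1 and B = (b_j) ⊆ K_2 be sequences, and let Ω = A ⊕ B be their intertwining sequence in K = K_1 × K_2 ⊆ ℂ^{p_1+p_2}. If Ω is a pseudo Leja sequence for K with Edrei growth (M_j)_{j≥1}, then A is a pseudo Leja sequence for K_1 with Edrei growth M'_i = M_{N(i)}, where N(i) is the unique index with φ(N(i)) = (i, 0), and B is a pseudo Leja sequence for K_2 with Edrei growth M''_i = M_{N'(i)}, where N'(i) is the unique index with φ(N'(i)) = (0, i). -/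

import Mathlib

/-
Fix the second factor at `b 0`. Along the indices `N i`, where `κ (N i) = (κ₁ i, 0)`, the graded
lexicographic order forces every monomial `e_m` with `m ≤ N j` to restrict to the slice
`z ↦ (z, b 0)` as a multiple of some `e'_i` with `i ≤ j`. Hence the function
`z ↦ vdm(ω_0, …, ω_{N j - 1}, (z, b 0))` lies in the span of `e'_0, …, e'_j` and vanishes at
`a_0, …, a_{j-1}`; by Cramer's rule it is a constant multiple of `z ↦ vdm(a_0, …, a_{j-1}, z)`,
so the Leja inequality of `Ω` at `N j` becomes that of `A` at `j` with the same `M_{N j}`. The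
constant is nonzero because no Vandermonde determinant of a pseudo Leja sequence for a determining
set vanishes. Finally `N` maps the block of indices of degree `d` into the block of degree `d`, so
the Edrei growth passes to `M ∘ N`.
-/

open scoped BigOperators
open Filter

namespace PseudoLeja

/-- Graded lexicographic strict order on multi-indices in `ℕ^p`:
`α ≺ β` iff `|α| < |β|`, or `|α| = |β|` and the leftmost nonzero entry of `α - β`
is negative (i.e. at the first index where they differ, `α` is smaller). -/
def GLexLT {p : ℕ} (α β : Fin p → ℕ) : Prop :=
  (∑ i, α i) < (∑ i, β i) ∨
    ((∑ i, α i) = (∑ i, β i) ∧ ∃ k, (∀ i, i < k → α i = β i) ∧ α k < β k)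

/-- `κ : ℕ → ℕ^p` is the (unique) enumeration of all multi-indices that is strictly
increasing from the usual order on `ℕ` to the graded lexicographic order. -/
def IsGLexEnum {p : ℕ} (κ : ℕ → Fin p → ℕ) : Prop :=
  Function.Bijective κ ∧ ∀ m n : ℕ, m < n → GLexLT (κ m) (κ n)

/-- The `N`-th monomial `e_N(z) = z^{κ(N)}`. -/
noncomputable def mono {p : ℕ} (κ : ℕ → Fin p → ℕ) (N : ℕ) (z : Fin p → ℂ) : ℂ :=
  ∏ i, z i ^ κ N i

/-- Vandermonde determinant of the points `ξ 0, …, ξ (n-1)`: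
`vdm κ n ξ = det [e_N(ξ_M)]_{0 ≤ M, N ≤ n-1}`. -/
noncomputable def vdm {p : ℕ} (κ : ℕ → Fin p → ℕ) (n : ℕ) (ξ : ℕ → Fin p → ℂ) : ℂ :=
  Matrix.det (Matrix.of fun M N : Fin n => mono κ (N : ℕ) (ξ (M : ℕ)))

/-- A set `K ⊆ ℂ^p` is determining if no nonzero polynomial in `p` complex
variables vanishes identically on `K`. -/
def Determining {p : ℕ} (K : Set (Fin p → ℂ)) : Prop :=
  ∀ P : MvPolynomial (Fin p) ℂ, (∀ z ∈ K, MvPolynomial.eval z P = 0) → P = 0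

/-- `h_d = C(p+d, d)`, the dimension of the space of polynomials of total degree
at most `d` in `p` variables. -/
def hdim (p d : ℕ) : ℕ := Nat.choose (p + d) d

/-- `l_d = p·C(p+d, p+1)`, the degree of the Vandermonde determinant of `h_d` points. -/
def ldim (p d : ℕ) : ℕ := p * Nat.choose (p + d) (p + 1)

/-- `V_j(K)`, the maximal modulus of the Vandermonde determinant of `j` points of `K`. -/
noncomputable def Vsup {p : ℕ} (κ : ℕ → Fin p → ℕ) (K : Set (Fin p → ℂ)) (j : ℕ) : ℝ :=
  sSup { v : ℝ | ∃ ξ : ℕ → Fin p → ℂ, (∀ i, ξ i ∈ K) ∧ v = ‖vdm κ j ξ‖ }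

/-- `(ξ_j)_{j≥0} ⊆ K` is a pseudo Leja sequence for `K` with Edrei growth `(M_j)_{j≥1}`:
`M_j ≥ 1`, `M_j·|vdm(ξ_0,…,ξ_j)| ≥ max_{z∈K} |vdm(ξ_0,…,ξ_{j-1},z)|` for `j ≥ 1`, and
`lim_{d→∞} (max_{h_{d-1} ≤ j < h_d} M_j)^{1/d} = 1`. -/
def IsPseudoLeja {p : ℕ} (κ : ℕ → Fin p → ℕ) (K : Set (Fin p → ℂ))
    (ξ : ℕ → Fin p → ℂ) (M : ℕ → ℝ) : Prop :=
  (∀ j, ξ j ∈ K) ∧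
  (∀ j, 1 ≤ j → 1 ≤ M j) ∧
  (∀ j, 1 ≤ j → ∀ z ∈ K,
    ‖vdm κ (j + 1) (Function.update ξ j z)‖ ≤
      M j * ‖vdm κ (j + 1) ξ‖) ∧
  Filter.Tendsto
    (fun d : ℕ => (sSup (M '' Set.Ico (hdim p (d - 1)) (hdim p d))) ^ ((d : ℝ)⁻¹))
    Filter.atTop (nhds 1)

theorem GLexLT.irrefl {p : ℕ} (α : Fin p → ℕ) : ¬ GLexLT α α := by
  rintro (h | ⟨-, k, -, hk⟩) <;> exact lt_irrefl _ ‹_›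

theorem GLexLT.asymm {p : ℕ} {α β : Fin p → ℕ} (h₁ : GLexLT α β) (h₂ : GLexLT β α) : False := by
  rcases h₁ with h₁ | ⟨e₁, k₁, hpre₁, hk₁⟩ <;> rcases h₂ with h₂ | ⟨e₂, k₂, hpre₂, hk₂⟩
  · omega
  · omega
  · omega
  · rcases lt_trichotomy k₁ k₂ with h | rfl | h
    · have := hpre₂ k₁ h; omega
    · omega
    · have := hpre₁ k₂ h; omega

theorem GLexLT.sum_le {p : ℕ} {α β : Fin p → ℕ} (h : GLexLT α β) : ∑ i, α i ≤ ∑ i, β i := by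
  rcases h with h | ⟨h, -⟩ <;> omega

theorem sum_append {p₁ p₂ : ℕ} (α : Fin p₁ → ℕ) (β : Fin p₂ → ℕ) :
    ∑ i, Fin.append α β i = ∑ i, α i + ∑ i, β i := by
  simp [Fin.sum_univ_add]

theorem GLexLT.append_zero {p₁ p₂ : ℕ} {α α' : Fin p₁ → ℕ} (h : GLexLT α α')
    (β' : Fin p₂ → ℕ) : GLexLT (Fin.append α 0) (Fin.append α' β') := by
  simp only [GLexLT, sum_append, Pi.zero_apply, Finset.sum_const_zero, add_zero]
  rcases h with h | ⟨e, k, hpre, hk⟩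
  · left; omega
  rcases Nat.eq_zero_or_pos (∑ i, β' i) with hβ | hβ
  · refine Or.inr ⟨by omega, Fin.castAdd p₂ k, fun i hi => ?_, by simpa only [Fin.append_left]⟩
    refine Fin.addCases (fun i₁ hi => ?_) (fun i₂ hi => ?_) i hi
    · simpa using hpre i₁ (by simpa only [Fin.lt_def, Fin.val_castAdd] using hi)
    · simp only [Fin.lt_def, Fin.val_natAdd, Fin.val_castAdd] at hi; omega
  · left; omega

theorem GLexLT.zero_append {p₁ p₂ : ℕ} {β β' : Fin p₂ → ℕ} (h : GLexLT β β')
    (α' : Fin p₁ → ℕ) : GLexLT (Fin.append 0 β) (Fin.append α' β') := by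
  simp only [GLexLT, sum_append, Pi.zero_apply, Finset.sum_const_zero, zero_add]
  rcases h with h | ⟨e, k, hpre, hk⟩
  · left; omega
  rcases Nat.eq_zero_or_pos (∑ i, α' i) with hα | hα
  · have hα' : ∀ i, α' i = 0 := by simpa using hα
    refine Or.inr ⟨by omega, Fin.natAdd p₁ k, fun i hi => ?_, by simpa only [Fin.append_right]⟩
    refine Fin.addCases (fun i₁ hi => ?_) (fun i₂ hi => ?_) i hi
    · rw [Fin.append_left, Fin.append_left, hα']; rfl
    · simpa using hpre i₂ (by simpa only [Fin.lt_def, Fin.val_natAdd, add_lt_add_iff_left] using hi)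
  · left; omega

theorem IsGLexEnum.lt_of_glexLT {p : ℕ} {κ : ℕ → Fin p → ℕ} (hκ : IsGLexEnum κ) {m n : ℕ}
    (h : GLexLT (κ m) (κ n)) : m < n := by
  rcases lt_trichotomy m n with hmn | rfl | hmn
  · exact hmn
  · exact absurd h (GLexLT.irrefl _)
  · exact (h.asymm (hκ.2 n m hmn)).elim

theorem IsGLexEnum.apply_zero {p : ℕ} {κ : ℕ → Fin p → ℕ} (hκ : IsGLexEnum κ) : κ 0 = 0 := by
  obtain ⟨n, hn⟩ := hκ.1.2 0
  rcases Nat.eq_zero_or_pos n with rfl | hn₀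
  · exact hn
  · have := (hn ▸ hκ.2 0 n hn₀).sum_le
    simp only [Pi.zero_apply, Finset.sum_const_zero, nonpos_iff_eq_zero,
      Finset.sum_eq_zero_iff, Finset.mem_univ, true_implies] at this
    exact funext this

theorem IsGLexEnum.pos {p : ℕ} {κ : ℕ → Fin p → ℕ} (hκ : IsGLexEnum κ) : 0 < p := by
  rcases Nat.eq_zero_or_pos p with rfl | hp
  · exact absurd (hκ.1.1 (Subsingleton.elim (κ 0) (κ 1))) zero_ne_one
  · exact hp

theorem IsGLexEnum.monotone_sum {p : ℕ} {κ : ℕ → Fin p → ℕ} (hκ : IsGLexEnum κ) :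
    Monotone fun j => ∑ i, κ j i := by
  intro m n hmn
  rcases hmn.lt_or_eq with hmn | rfl
  · exact (hκ.2 m n hmn).sum_le
  · rfl

def degLE (p d : ℕ) : Finset (Fin p → ℕ) :=
  (Finset.range (d + 1)).biUnion fun s => Finset.univ.piAntidiag s

theorem mem_degLE {p d : ℕ} {α : Fin p → ℕ} : α ∈ degLE p d ↔ ∑ i, α i ≤ d := by
  simp [degLE]

theorem card_piAntidiag_univ (p s : ℕ) :
    (Finset.univ.piAntidiag s : Finset (Fin p → ℕ)).card = p.multichoose s := by
  rw [← Finset.map_sym_eq_piAntidiag, Finset.card_map, Finset.sym_univ, Finset.card_univ,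
    Sym.card_sym_fin_eq_multichoose]

theorem sum_range_multichoose (p d : ℕ) :
    ∑ s ∈ Finset.range (d + 1), p.multichoose s = (p + 1).multichoose d := by
  induction d with
  | zero => simp
  | succ d ih => rw [Finset.sum_range_succ, ih, Nat.multichoose_succ_succ, add_comm]

theorem card_degLE (p d : ℕ) : (degLE p d).card = hdim p d := by
  rw [degLE, Finset.card_biUnion]
  · rw [Finset.sum_congr rfl fun s _ => card_piAntidiag_univ p s, sum_range_multichoose,
      Nat.multichoose_eq, hdim, Nat.add_right_comm, Nat.add_sub_cancel]
  · intro s _ t _ hst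
    exact Finset.disjoint_left.mpr fun α hs ht => hst ((Finset.mem_piAntidiag.mp hs).1.symm.trans
      (Finset.mem_piAntidiag.mp ht).1)

theorem IsGLexEnum.lt_hdim_iff {p : ℕ} {κ : ℕ → Fin p → ℕ} (hκ : IsGLexEnum κ) (d j : ℕ) :
    j < hdim p d ↔ ∑ i, κ j i ≤ d := by
  set S := (degLE p d).map (Equiv.ofBijective κ hκ.1).symm.toEmbedding
  have hS : S.card = hdim p d := by rw [Finset.card_map, card_degLE]
  have hmem : ∀ m, m ∈ S ↔ ∑ i, κ m i ≤ d := fun m => by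
    rw [Finset.mem_map_equiv, Equiv.symm_symm, Equiv.ofBijective_apply, mem_degLE]
  constructor
  · intro hj
    by_contra! hd
    have hsub : S ⊆ Finset.range j := fun m hm => Finset.mem_range.mpr <|
      lt_of_not_ge fun hjm => ((hmem m).mp hm).not_gt (hd.trans_le (hκ.monotone_sum hjm))
    have := Finset.card_le_card hsub
    rw [hS, Finset.card_range] at this
    omega
  · intro hd
    have hsub : Finset.range (j + 1) ⊆ S := fun m hm =>
      (hmem m).mpr ((hκ.monotone_sum (Nat.lt_succ_iff.mp (Finset.mem_range.mp hm))).trans hd)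
    have := Finset.card_le_card hsub
    rw [hS, Finset.card_range] at this
    omega

theorem IsGLexEnum.mem_Ico_hdim_iff {p : ℕ} {κ : ℕ → Fin p → ℕ} (hκ : IsGLexEnum κ) {d : ℕ}
    (hd : 0 < d) (j : ℕ) : j ∈ Set.Ico (hdim p (d - 1)) (hdim p d) ↔ ∑ i, κ j i = d := by
  rw [Set.mem_Ico, ← not_lt, hκ.lt_hdim_iff, hκ.lt_hdim_iff]
  omega

theorem hdim_pred_lt {p d : ℕ} (hp : 0 < p) (hd : 0 < d) : hdim p (d - 1) < hdim p d := by
  obtain ⟨e, rfl⟩ := Nat.exists_eq_add_of_lt hd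
  rw [zero_add, Nat.add_sub_cancel, hdim, hdim, ← add_assoc, Nat.choose_succ_succ']
  exact Nat.lt_add_of_pos_right (Nat.choose_pos (by omega))

theorem tendsto_sSup_rpow_inv_of_subset {S S' : ℕ → Set ℝ} (hbdd : ∀ d, BddAbove (S d))
    (hsub : ∀ d, S' d ⊆ S d) (hone : ∀ᶠ d in atTop, ∃ x ∈ S' d, 1 ≤ x)
    (h : Tendsto (fun d : ℕ => sSup (S d) ^ (d : ℝ)⁻¹) atTop (nhds 1)) :
    Tendsto (fun d : ℕ => sSup (S' d) ^ (d : ℝ)⁻¹) atTop (nhds 1) := by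
  have hbounds : ∀ᶠ d in atTop, 1 ≤ sSup (S' d) ∧ sSup (S' d) ≤ sSup (S d) := by
    filter_upwards [hone] with d ⟨x, hx, hx1⟩
    exact ⟨le_csSup_of_le ((hbdd d).mono (hsub d)) hx hx1,
      csSup_le_csSup (hbdd d) ⟨x, hx⟩ (hsub d)⟩
  refine tendsto_of_tendsto_of_tendsto_of_le_of_le' tendsto_const_nhds h ?_ ?_
  · filter_upwards [hbounds] with d hd
    exact Real.one_le_rpow hd.1 (by positivity)
  · filter_upwards [hbounds] with d hd
    exact Real.rpow_le_rpow (zero_le_one.trans hd.1) hd.2 (by positivity)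

theorem vdm_one {p : ℕ} {κ : ℕ → Fin p → ℕ} (hκ : κ 0 = 0) (ξ : ℕ → Fin p → ℂ) :
    vdm κ 1 ξ = 1 := by
  simp [vdm, mono, hκ]

theorem vdm_update_of_le {p : ℕ} (κ : ℕ → Fin p → ℕ) (ξ : ℕ → Fin p → ℂ) {n j : ℕ}
    (h : n ≤ j) (z : Fin p → ℂ) : vdm κ n (Function.update ξ j z) = vdm κ n ξ := by
  unfold vdm
  congr 1
  ext M N
  simp [Function.update_of_ne (M.isLt.trans_le h).ne]

theorem vdm_update_eq_zero_of_lt {p : ℕ} (κ : ℕ → Fin p → ℕ) (ξ : ℕ → Fin p → ℂ) {k n : ℕ}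
    (h : k < n) : vdm κ (n + 1) (Function.update ξ n (ξ k)) = 0 := by
  refine Matrix.det_zero_of_row_eq (i := ⟨k, by omega⟩) (j := Fin.last n)
    (fun hk => h.ne (congrArg Fin.val hk)) ?_
  ext N
  simp [Function.update_of_ne h.ne]

theorem exists_vdm_succ_update_eq_sum {p : ℕ} (κ : ℕ → Fin p → ℕ) (n : ℕ)
    (ξ : ℕ → Fin p → ℂ) : ∃ c : Fin (n + 1) → ℂ, c (Fin.last n) = vdm κ n ξ ∧
      ∀ z, vdm κ (n + 1) (Function.update ξ n z) = ∑ i, c i * mono κ i z := by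
  refine ⟨fun i => (-1) ^ (n + (i : ℕ)) *
    (Matrix.of fun M N : Fin n => mono κ (i.succAbove N) (ξ M)).det, ?_, fun z => ?_⟩
  · simp [vdm, Fin.succAbove_last, ← two_mul]
  · rw [vdm, Matrix.det_succ_row _ (Fin.last n)]
    refine Finset.sum_congr rfl fun i _ => ?_
    have hminor :
        (Matrix.of fun M N : Fin (n + 1) => mono κ N (Function.update ξ n z M)).submatrix
          (Fin.last n).succAbove i.succAbove =
        Matrix.of fun M N : Fin n => mono κ (i.succAbove N) (ξ M) :=
      Matrix.ext fun M N => by simp [Fin.succAbove_last, Function.update_of_ne M.isLt.ne]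
    simp only [hminor, Matrix.of_apply, Fin.val_last, Function.update_self]
    ring

theorem mono_append {p₁ p₂ : ℕ} {κ : ℕ → Fin (p₁ + p₂) → ℕ} {κ₁ : ℕ → Fin p₁ → ℕ}
    {κ₂ : ℕ → Fin p₂ → ℕ} {m m₁ m₂ : ℕ} (h : κ m = Fin.append (κ₁ m₁) (κ₂ m₂))
    (z : Fin p₁ → ℂ) (w : Fin p₂ → ℂ) :
    mono κ m (Fin.append z w) = mono κ₁ m₁ z * mono κ₂ m₂ w := by
  simp [mono, h, Fin.prod_univ_add]

def monoSpan {p : ℕ} (κ : ℕ → Fin p → ℕ) (j : ℕ) : Submodule ℂ ((Fin p → ℂ) → ℂ) :=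
  Submodule.span ℂ (Set.range fun i : Fin (j + 1) => mono κ i)

open scoped Matrix in
/-- Cramer's rule for the Vandermonde matrix of `ξ 0, …, ξ (j-1), x`, applied to the coefficient
vector of `f`. -/
theorem exists_mul_vdm_eq_of_mem_span {p : ℕ} (κ : ℕ → Fin p → ℕ) {j : ℕ}
    {f : (Fin p → ℂ) → ℂ} (hf : f ∈ monoSpan κ j)
    (ξ : ℕ → Fin p → ℂ) (hξ : ∀ m < j, f (ξ m) = 0) :
    ∃ c : ℂ, ∀ x, f x * vdm κ j ξ = c * vdm κ (j + 1) (Function.update ξ j x) := by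
  obtain ⟨c, rfl⟩ := (Submodule.mem_span_range_iff_exists_fun ℂ).mp hf
  refine ⟨c (Fin.last j), fun x => ?_⟩
  set A := Matrix.of fun M N : Fin (j + 1) => mono κ N (Function.update ξ j x M)
  have hAc : A *ᵥ c = Pi.single (Fin.last j) ((∑ i, c i • mono κ i) x) := by
    ext M
    rcases Fin.eq_castSucc_or_eq_last M with ⟨m, rfl⟩ | rfl
    · rw [Pi.single_eq_of_ne (Fin.castSucc_lt_last m).ne, ← hξ m m.isLt]
      simp [A, Matrix.mulVec, dotProduct, Function.update_of_ne m.isLt.ne, mul_comm]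
    · simp [A, Matrix.mulVec, dotProduct, mul_comm]
  have hminor : A.adjugate (Fin.last j) (Fin.last j) = vdm κ j ξ := by
    rw [Matrix.adjugate_fin_succ_eq_det_submatrix, Fin.succAbove_last, Fin.val_last,
      Even.neg_one_pow ⟨j, rfl⟩, one_mul, ← vdm_update_of_le κ ξ le_rfl x]
    rfl
  have hcramer := congrFun (congrArg (A.adjugate *ᵥ ·) hAc) (Fin.last j)
  simp only [Matrix.mulVec_mulVec, Matrix.adjugate_mul, Matrix.smul_mulVec, Matrix.one_mulVec,
    Pi.smul_apply, smul_eq_mul, Matrix.mulVec_single, MulOpposite.smul_eq_mul_unop,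
    MulOpposite.unop_op, Matrix.col_apply, hminor] at hcramer
  rw [mul_comm, ← hcramer, mul_comm]
  rfl

theorem Determining.eq_zero_of_sum_mono {p n : ℕ} {K : Set (Fin p → ℂ)} (hK : Determining K)
    {κ : ℕ → Fin p → ℕ} (hκ : Function.Injective κ) {c : Fin n → ℂ}
    (hc : ∀ z ∈ K, ∑ i : Fin n, c i * mono κ i z = 0) : c = 0 := by
  set P : MvPolynomial (Fin p) ℂ :=
    ∑ i : Fin n, MvPolynomial.monomial (Finsupp.equivFunOnFinite.symm (κ i)) (c i)
  have hP : P = 0 := hK P fun z hz => by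
    simpa [P, MvPolynomial.eval_monomial, Finsupp.prod_fintype, mono] using hc z hz
  ext i
  have hcoeff := congrArg (MvPolynomial.coeff (Finsupp.equivFunOnFinite.symm (κ i))) hP
  rwa [MvPolynomial.coeff_sum, Finset.sum_eq_single i, MvPolynomial.coeff_monomial, if_pos rfl]
    at hcoeff
  · intro i' _ hi'
    rw [MvPolynomial.coeff_monomial, if_neg]
    exact fun h => hi' (Fin.ext (hκ (Finsupp.equivFunOnFinite.symm.injective h)))
  · simp

open MvPolynomial in
theorem eval_sumRingEquiv {R σ₁ σ₂ : Type*} [CommRing R] (z : σ₁ → R) (w : σ₂ → R)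
    (P : MvPolynomial (σ₁ ⊕ σ₂) R) :
    eval z (map (eval w) (sumRingEquiv R σ₁ σ₂ P)) = eval (Sum.elim z w) P := by
  induction P using MvPolynomial.induction_on with
  | C a => simp
  | add P Q hP hQ => simp [hP, hQ]
  | mul_X P i hP => cases i <;> simp [hP]

open MvPolynomial in
theorem Determining.image2_append {p₁ p₂ : ℕ} {K₁ : Set (Fin p₁ → ℂ)} {K₂ : Set (Fin p₂ → ℂ)}
    (h₁ : Determining K₁) (h₂ : Determining K₂) : Determining (Set.image2 Fin.append K₁ K₂) := by
  intro P hP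
  set Q := sumRingEquiv ℂ (Fin p₁) (Fin p₂) (rename finSumFinEquiv.symm P)
  have heval : ∀ z w, eval z (map (eval w) Q) = eval (Fin.append z w) P := fun z w => by
    have happend : Sum.elim z w ∘ finSumFinEquiv.symm = Fin.append z w := by
      funext i
      refine Fin.addCases (fun i₁ => ?_) (fun i₂ => ?_) i <;> simp
    rw [eval_sumRingEquiv, eval_rename, happend]
  have hQ : Q = 0 := by
    ext α : 1
    refine h₂ _ fun w hw => ?_
    have := h₁ (map (eval w) Q) fun z hz => (heval z w).trans (hP _ (Set.mem_image2_of_mem hz hw))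
    simpa [coeff_map] using congrArg (coeff α) this
  simpa [Q, map_eq_zero_iff _ (rename_injective _ finSumFinEquiv.symm.injective)] using hQ

def LejaIneq {p : ℕ} (κ : ℕ → Fin p → ℕ) (K : Set (Fin p → ℂ)) (ξ : ℕ → Fin p → ℂ)
    (M : ℕ → ℝ) : Prop :=
  ∀ j, 1 ≤ j → ∀ z ∈ K, ‖vdm κ (j + 1) (Function.update ξ j z)‖ ≤ M j * ‖vdm κ (j + 1) ξ‖

theorem Determining.vdm_ne_zero {p : ℕ} {K : Set (Fin p → ℂ)} (hK : Determining K)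
    {κ : ℕ → Fin p → ℕ} (hκ : IsGLexEnum κ) {ω : ℕ → Fin p → ℂ} {M : ℕ → ℝ}
    (hω : LejaIneq κ K ω M) (n : ℕ) : vdm κ n ω ≠ 0 := by
  induction n with
  | zero => simp [vdm]
  | succ n ih =>
    rcases Nat.eq_zero_or_pos n with rfl | hn
    · simp [vdm_one hκ.apply_zero]
    intro hzero
    obtain ⟨c, hlast, hc⟩ := exists_vdm_succ_update_eq_sum κ n ω
    have hvanish : ∀ z ∈ K, ∑ i, c i * mono κ i z = 0 := fun z hz => by
      simpa [hzero, ← hc] using hω n hn z hz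
    exact ih (hlast ▸ congrFun (hK.eq_zero_of_sum_mono hκ.1.1 hvanish) (Fin.last n))

theorem norm_le_mul_norm_of_mul_eq {X 𝕜 : Type*} [NormedField 𝕜] {D Q : X → 𝕜} {v c : 𝕜}
    {y : X} {S : Set X} {M : ℝ} (hv : v ≠ 0) (hDy : D y ≠ 0) (h : ∀ x, D x * v = c * Q x)
    (hle : ∀ x ∈ S, ‖D x‖ ≤ M * ‖D y‖) : ∀ x ∈ S, ‖Q x‖ ≤ M * ‖Q y‖ := by
  intro x hx
  have hc : c ≠ 0 := left_ne_zero_of_mul (h y ▸ mul_ne_zero hDy hv)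
  refine le_of_mul_le_mul_left ?_ (norm_pos_iff.mpr hc)
  calc ‖c‖ * ‖Q x‖ = ‖D x‖ * ‖v‖ := by rw [← norm_mul, ← norm_mul, h]
    _ ≤ M * ‖D y‖ * ‖v‖ := by gcongr; exact hle x hx
    _ = ‖c‖ * (M * ‖Q y‖) := by rw [mul_assoc, ← norm_mul, h, norm_mul, mul_left_comm]

section Factor

variable {p q : ℕ} {κ : ℕ → Fin p → ℕ} {κ' : ℕ → Fin q → ℕ} {ω : ℕ → Fin p → ℂ}
  {a : ℕ → Fin q → ℂ} {emb : (Fin q → ℂ) → (Fin p → ℂ)} {N : ℕ → ℕ}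

theorem exists_vdm_update_comp_mul_eq (hN : StrictMono N) (hω : ∀ i, ω (N i) = emb (a i))
    {j : ℕ} (hspan : ∀ m ≤ N j, (fun x => mono κ m (emb x)) ∈ monoSpan κ' j) :
    ∃ c : ℂ, ∀ x, vdm κ (N j + 1) (Function.update ω (N j) (emb x)) * vdm κ' j a =
      c * vdm κ' (j + 1) (Function.update a j x) := by
  refine exists_mul_vdm_eq_of_mem_span κ' ?_ a fun m hm => ?_
  · obtain ⟨c, -, hc⟩ := exists_vdm_succ_update_eq_sum κ (N j) ω
    have hsum : (fun x => vdm κ (N j + 1) (Function.update ω (N j) (emb x))) =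
        ∑ i, c i • fun x => mono κ i (emb x) := by
      funext x
      simp [hc]
    rw [hsum]
    exact Submodule.sum_mem _ fun i _ =>
      Submodule.smul_mem _ _ (hspan i (Nat.lt_succ_iff.mp i.isLt))
  · rw [← hω m]
    exact vdm_update_eq_zero_of_lt κ ω (hN hm)

theorem lejaIneq_comp_of_factor {K : Set (Fin p → ℂ)} {K' : Set (Fin q → ℂ)} {M : ℕ → ℝ}
    (hW : ∀ n, vdm κ n ω ≠ 0) (hLeja : LejaIneq κ K ω M) (hemb : Set.MapsTo emb K' K)
    (hN : StrictMono N) (hω : ∀ i, ω (N i) = emb (a i))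
    (hspan : ∀ j, ∀ m ≤ N j, (fun x => mono κ m (emb x)) ∈ monoSpan κ' j) :
    LejaIneq κ' K' a fun i => M (N i) := by
  have hstep := fun j => exists_vdm_update_comp_mul_eq hN hω (hspan j)
  have hself : ∀ j, Function.update ω (N j) (emb (a j)) = ω := fun j => by
    rw [← hω, Function.update_eq_self]
  have hV : ∀ j, vdm κ' j a ≠ 0 := by
    intro j
    induction j with
    | zero => simp [vdm]
    | succ j ih =>
      obtain ⟨c, hc⟩ := hstep j
      have h := hc (a j)
      rw [hself, Function.update_eq_self] at h
      exact right_ne_zero_of_mul (h ▸ mul_ne_zero (hW _) ih)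
  intro j hj x hx
  obtain ⟨c, hc⟩ := hstep j
  refine norm_le_mul_norm_of_mul_eq (hV j) (hself j ▸ hW _) hc (fun x hx => ?_) x hx
    |>.trans_eq (by rw [Function.update_eq_self])
  rw [hself]
  exact hLeja (N j) ((Nat.zero_le _).trans_lt (hN hj)) (emb x) (hemb hx)

end Factor

theorem IsPseudoLeja.of_factor {p q : ℕ} {κ : ℕ → Fin p → ℕ} {κ' : ℕ → Fin q → ℕ}
    (hκ : IsGLexEnum κ) (hκ' : IsGLexEnum κ') {K : Set (Fin p → ℂ)} {K' : Set (Fin q → ℂ)}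
    (hK : Determining K) {ω : ℕ → Fin p → ℂ} {M : ℕ → ℝ} (hPL : IsPseudoLeja κ K ω M)
    {emb : (Fin q → ℂ) → (Fin p → ℂ)} (hemb : Set.MapsTo emb K' K)
    {a : ℕ → Fin q → ℂ} (ha : ∀ j, a j ∈ K') {N g : ℕ → ℕ} {w : ℕ → ℂ}
    (hmono : ∀ m x, mono κ m (emb x) = w m * mono κ' (g m) x) (hgN : ∀ i, g (N i) = i)
    (hω : ∀ i, ω (N i) = emb (a i))
    (hglex : ∀ i m, GLexLT (κ' i) (κ' (g m)) → GLexLT (κ (N i)) (κ m))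
    (hdeg : ∀ i, ∑ k, κ (N i) k = ∑ k, κ' i k) :
    IsPseudoLeja κ' K' a fun i => M (N i) := by
  obtain ⟨-, hM1, hLeja, hlim⟩ := hPL
  have hN : StrictMono N := fun i i' h =>
    hκ.lt_of_glexLT (hglex i (N i') (by rw [hgN]; exact hκ'.2 i i' h))
  have hN1 : ∀ j, 1 ≤ j → 1 ≤ N j := fun j hj => (Nat.zero_le _).trans_lt (hN hj)
  have hspan : ∀ j, ∀ m ≤ N j, (fun x => mono κ m (emb x)) ∈ monoSpan κ' j := by
    intro j m hm
    have hgm : g m < j + 1 := Nat.lt_succ_of_le <| not_lt.mp fun h =>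
      hm.not_gt (hκ.lt_of_glexLT (hglex j m (hκ'.2 j (g m) h)))
    simp_rw [hmono]
    exact Submodule.smul_mem _ _ (Submodule.subset_span ⟨⟨g m, hgm⟩, rfl⟩)
  refine ⟨ha, fun j hj => hM1 _ (hN1 j hj),
    lejaIneq_comp_of_factor (hK.vdm_ne_zero hκ hLeja) hLeja hemb hN hω hspan, ?_⟩
  refine tendsto_sSup_rpow_inv_of_subset (fun d => ((Set.finite_Ico _ _).image M).bddAbove)
    (fun d => ?_) ?_ hlim
  · rintro _ ⟨i, hi, rfl⟩
    rcases Nat.eq_zero_or_pos d with rfl | hd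
    · simp at hi
    · exact ⟨N i, (hκ.mem_Ico_hdim_iff hd _).mpr
        ((hdeg i).trans ((hκ'.mem_Ico_hdim_iff hd i).mp hi)), rfl⟩
  · filter_upwards [eventually_gt_atTop 0] with d hd
    exact ⟨_, ⟨hdim q (d - 1), ⟨le_rfl, hdim_pred_lt hκ'.pos hd⟩, rfl⟩,
      hM1 _ (hN1 _ (Nat.choose_pos (Nat.le_add_left _ _)))⟩

theorem intertwining_pseudoLeja_factors_general {p₁ p₂ : ℕ}
    (κ₁ : ℕ → Fin p₁ → ℕ) (κ₂ : ℕ → Fin p₂ → ℕ) (κ : ℕ → Fin (p₁ + p₂) → ℕ)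
    (hκ₁ : IsGLexEnum κ₁) (hκ₂ : IsGLexEnum κ₂) (hκ : IsGLexEnum κ)
    (φ₁ φ₂ : ℕ → ℕ)
    (hφ : ∀ j : ℕ, κ j = Fin.append (κ₁ (φ₁ j)) (κ₂ (φ₂ j)))
    (K₁ : Set (Fin p₁ → ℂ)) (K₂ : Set (Fin p₂ → ℂ))
    (hK₁d : Determining K₁) (hK₂d : Determining K₂)
    (a : ℕ → Fin p₁ → ℂ) (b : ℕ → Fin p₂ → ℂ)
    (haK : ∀ j, a j ∈ K₁) (hbK : ∀ j, b j ∈ K₂)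
    (ω : ℕ → Fin (p₁ + p₂) → ℂ)
    (hω : ∀ j : ℕ, ω j = Fin.append (a (φ₁ j)) (b (φ₂ j)))
    (M : ℕ → ℝ)
    (hPL : IsPseudoLeja κ (Set.image2 Fin.append K₁ K₂) ω M)
    (N N' : ℕ → ℕ)
    (hN : ∀ i : ℕ, φ₁ (N i) = i ∧ φ₂ (N i) = 0)
    (hN' : ∀ i : ℕ, φ₁ (N' i) = 0 ∧ φ₂ (N' i) = i) :
    IsPseudoLeja κ₁ K₁ a (fun i => M (N i)) ∧
    IsPseudoLeja κ₂ K₂ b (fun i => M (N' i)) := by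
  have hK := hK₁d.image2_append hK₂d
  have hκN : ∀ i, κ (N i) = Fin.append (κ₁ i) 0 := fun i => by
    rw [hφ, (hN i).1, (hN i).2, hκ₂.apply_zero]
  have hκN' : ∀ i, κ (N' i) = Fin.append 0 (κ₂ i) := fun i => by
    rw [hφ, (hN' i).1, (hN' i).2, hκ₁.apply_zero]
  constructor
  · refine hPL.of_factor hκ hκ₁ hK (fun x hx => Set.mem_image2_of_mem hx (hbK 0)) haK
      (g := φ₁) (w := fun m => mono κ₂ (φ₂ m) (b 0))
      (fun m x => (mono_append (hφ m) x (b 0)).trans (mul_comm _ _)) (fun i => (hN i).1)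
      (fun i => by rw [hω, (hN i).1, (hN i).2]) (fun i m h => ?_)
      (fun i => by simp [hκN, sum_append])
    rw [hκN, hφ]
    exact h.append_zero _
  · refine hPL.of_factor hκ hκ₂ hK (fun y hy => Set.mem_image2_of_mem (haK 0) hy) hbK
      (g := φ₂) (w := fun m => mono κ₁ (φ₁ m) (a 0))
      (fun m y => mono_append (hφ m) (a 0) y) (fun i => (hN' i).2)
      (fun i => by rw [hω, (hN' i).1, (hN' i).2]) (fun i m h => ?_)
      (fun i => by simp [hκN', sum_append])
    rw [hκN', hφ]
    exact h.zero_append _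

/-- if the intertwining sequence `Ω = A ⊕ B` is a pseudo Leja sequence for
`K = K₁ × K₂` with Edrei growth `(M_j)`, then `A` is a pseudo Leja sequence for `K₁` with
Edrei growth `M'_i = M_{N(i)}` (where `φ(N(i)) = (i,0)`) and `B` is a pseudo Leja sequence
for `K₂` with Edrei growth `M''_i = M_{N'(i)}` (where `φ(N'(i)) = (0,i)`). -/
theorem intertwining_pseudoLeja_factors {p₁ p₂ : ℕ} (hp₁ : 1 ≤ p₁) (hp₂ : 1 ≤ p₂)
    (κ₁ : ℕ → Fin p₁ → ℕ) (κ₂ : ℕ → Fin p₂ → ℕ) (κ : ℕ → Fin (p₁ + p₂) → ℕ)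
    (hκ₁ : IsGLexEnum κ₁) (hκ₂ : IsGLexEnum κ₂) (hκ : IsGLexEnum κ)
    (φ₁ φ₂ : ℕ → ℕ)
    (hφ : ∀ j : ℕ, κ j = Fin.append (κ₁ (φ₁ j)) (κ₂ (φ₂ j)))
    (K₁ : Set (Fin p₁ → ℂ)) (K₂ : Set (Fin p₂ → ℂ))
    (hK₁c : IsCompact K₁) (hK₂c : IsCompact K₂)
    (hK₁d : Determining K₁) (hK₂d : Determining K₂)
    (a : ℕ → Fin p₁ → ℂ) (b : ℕ → Fin p₂ → ℂ)
    (haK : ∀ j, a j ∈ K₁) (hbK : ∀ j, b j ∈ K₂)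
    (ω : ℕ → Fin (p₁ + p₂) → ℂ)
    (hω : ∀ j : ℕ, ω j = Fin.append (a (φ₁ j)) (b (φ₂ j)))
    (M : ℕ → ℝ)
    (hPL : IsPseudoLeja κ (Set.image2 Fin.append K₁ K₂) ω M)
    (N N' : ℕ → ℕ)
    (hN : ∀ i : ℕ, φ₁ (N i) = i ∧ φ₂ (N i) = 0)
    (hN' : ∀ i : ℕ, φ₁ (N' i) = 0 ∧ φ₂ (N' i) = i) :
    IsPseudoLeja κ₁ K₁ a (fun i => M (N i)) ∧
    IsPseudoLeja κ₂ K₂ b (fun i => M (N' i)) :=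
  intertwining_pseudoLeja_factors_general κ₁ κ₂ κ hκ₁ hκ₂ hκ φ₁ φ₂ hφ K₁ K₂ hK₁d hK₂d a b haK hbK ω
    hω M hPL N N' hN hN'

end PseudoLeja
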